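/- Let (X,u) be a regular closure space and (Y,v) an arbitrary closure space. For every interior cover 𝒞 of X, the 𝒞-topology on Y^X is admissible. -/

import Mathlib

/-! A point `(z, x)` of the closure of `A` with `g (z, x) ∉ v (g A)` leads to a contradiction:
by regularity `x` has a neighbourhood `K` whose closure lies in a member of `𝒞` and misses
`(g* z)⁻¹ (g A)`, so `(u K, (g A)ᶜ)` is a subbasic neighbourhood of `g* z`, and the neighbourhood
`g*⁻¹ (u K, (g A)ᶜ) × K` of `(z, x)` cannot meet `A`. -/

open Set

universe u

/-- A Čech closure operator on a type `X`: it satisfies (C1) `cl ∅ = ∅`,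
(C2) `A ⊆ cl A` and (C3) `cl (A ∪ B) = cl A ∪ cl B`.  The pair `(X, u)` is a
(Čech) closure space. -/
structure CechClosure (X : Type u) : Type u where
  cl : Set X → Set X
  cl_empty : cl ∅ = ∅
  subset_cl : ∀ A : Set X, A ⊆ cl A
  cl_union : ∀ A B : Set X, cl (A ∪ B) = cl A ∪ cl B

namespace CechClosure

variable {X Y Z : Type u}

/-- The interior operator of a closure space: `int_u A = X \ u (X \ A)`. -/
def interior (u : CechClosure X) (A : Set X) : Set X := (u.cl Aᶜ)ᶜ

/-- `U` is a neighbourhood of `x` in `(X, u)` if `x ∈ int_u U`. -/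
def Nhd (u : CechClosure X) (x : X) (U : Set X) : Prop := x ∈ u.interior U

theorem interior_subset (u : CechClosure X) (A : Set X) : u.interior A ⊆ A := by
  intro x hx
  by_contra h
  exact hx (u.subset_cl _ h)

theorem interior_inter (u : CechClosure X) (A B : Set X) :
    u.interior (A ∩ B) = u.interior A ∩ u.interior B := by
  unfold interior
  rw [compl_inter, u.cl_union, compl_union]

theorem nhd_univ (u : CechClosure X) (x : X) : u.Nhd x univ := by
  simp [Nhd, interior, u.cl_empty]

theorem nhd_inter (u : CechClosure X) {x : X} {A B : Set X} (hA : u.Nhd x A)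
    (hB : u.Nhd x B) : u.Nhd x (A ∩ B) := by
  have h := u.interior_inter A B
  unfold Nhd at *
  rw [h]
  exact ⟨hA, hB⟩

/-- A function `f : (X, u) → (Y, v)` between closure spaces is continuous if
`f (u A) ⊆ v (f A)` for every `A ⊆ X`. -/
def Continuous (u : CechClosure X) (v : CechClosure Y) (f : X → Y) : Prop :=
  ∀ A : Set X, f '' u.cl A ⊆ v.cl (f '' A)

/-- The product of two closure spaces: `(z, x)` is in the closure of `S` iff every
"rectangle" `W ×ˢ U` of neighbourhoods `W` of `z` and `U` of `x` meets `S`. -/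
def prod (w : CechClosure Z) (u : CechClosure X) : CechClosure (Z × X) where
  cl S := {p | ∀ W U, w.Nhd p.1 W → u.Nhd p.2 U → (W ×ˢ U ∩ S).Nonempty}
  cl_empty := by
    ext p
    simp only [mem_setOf_eq, mem_empty_iff_false, iff_false]
    intro h
    rcases h univ univ (w.nhd_univ _) (u.nhd_univ _) with ⟨q, -, hq⟩
    exact hq
  subset_cl := by
    intro S p hp W U hW hU
    exact ⟨p, ⟨⟨w.interior_subset _ hW, u.interior_subset _ hU⟩, hp⟩⟩
  cl_union := by
    intro S T
    ext p
    simp only [mem_setOf_eq, mem_union]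
    constructor
    · intro h
      by_contra hc
      push_neg at hc
      obtain ⟨h1, h2⟩ := hc
      simp only [← Set.not_nonempty_iff_eq_empty] at h1 h2
      obtain ⟨W1, U1, hW1, hU1, hne1⟩ := h1
      obtain ⟨W2, U2, hW2, hU2, hne2⟩ := h2
      rcases h (W1 ∩ W2) (U1 ∩ U2) (w.nhd_inter hW1 hW2) (u.nhd_inter hU1 hU2) with
        ⟨q, ⟨⟨hq1, hq2⟩, hqST⟩⟩
      rcases hqST with hqS | hqT
      · exact hne1 ⟨q, ⟨⟨hq1.1, hq2.1⟩, hqS⟩⟩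
      · exact hne2 ⟨q, ⟨⟨hq1.2, hq2.2⟩, hqT⟩⟩
    · rintro (h | h) W U hW hU
      · rcases h W U hW hU with ⟨q, hq1, hq2⟩
        exact ⟨q, hq1, Or.inl hq2⟩
      · rcases h W U hW hU with ⟨q, hq1, hq2⟩
        exact ⟨q, hq1, Or.inr hq2⟩

/-- `Y^X`: the type of continuous functions between the closure spaces
`(X, u)` and `(Y, v)`. -/
def ContMap (u : CechClosure X) (v : CechClosure Y) : Type u :=
  {f : X → Y // Continuous u v f}

/-- A closure operator `σ` on `Y^X` is proper (splitting) if for every closure space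
`(Z, w)`, continuity of `g : (Z, w) × (X, u) → (Y, v)` implies continuity of
`g* : (Z, w) → (Y^X, σ)`, where `g (z, x) = (g* z) x`. -/
def Proper (u : CechClosure X) (v : CechClosure Y) (σ : CechClosure (ContMap u v)) : Prop :=
  ∀ (Z : Type u) (w : CechClosure Z) (G : Z → ContMap u v),
    Continuous (w.prod u) v (fun p => (G p.1).1 p.2) → Continuous w σ G

/-- A closure operator `σ` on `Y^X` is admissible (jointly continuous) if for every closure
space `(Z, w)`, continuity of `g* : (Z, w) → (Y^X, σ)` implies continuity of
`g : (Z, w) × (X, u) → (Y, v)`, where `g (z, x) = (g* z) x`. -/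
def Admissible (u : CechClosure X) (v : CechClosure Y) (σ : CechClosure (ContMap u v)) : Prop :=
  ∀ (Z : Type u) (w : CechClosure Z) (G : Z → ContMap u v),
    Continuous w σ G → Continuous (w.prod u) v (fun p => (G p.1).1 p.2)

/-- A topological space regarded as a closure space via its (Kuratowski) closure operator. -/
def ofTop {Z : Type u} (t : TopologicalSpace Z) : CechClosure Z :=
  letI := t
  { cl := fun A => _root_.closure A
    cl_empty := closure_empty
    subset_cl := fun _ => subset_closure
    cl_union := fun _ _ => closure_union }

/-- `le` is the order relation of a directed set: a reflexive and transitive relation on a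
nonempty type in which every two elements have an upper bound. -/
structure IsDirectedOrder {Λ : Type*} (le : Λ → Λ → Prop) : Prop where
  refl : ∀ a, le a a
  trans : ∀ a b c, le a b → le b c → le a c
  directed : ∀ a b, ∃ c, le a c ∧ le b c
  nonempty : Nonempty Λ

/-- Convergence of a net `s : Λ → X` (with order `le` on `Λ`) to a point `x` in a closure
space `(X, u)`: every neighbourhood of `x` contains `s l` residually. -/
def NetConv (u : CechClosure X) {Λ : Type*} (le : Λ → Λ → Prop) (s : Λ → X) (x : X) : Prop :=
  ∀ U : Set X, u.Nhd x U → ∃ l₀, ∀ l, le l₀ l → s l ∈ U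

/-- The product order on `Λ × M`. -/
def prodLE {Λ M : Type*} (leΛ : Λ → Λ → Prop) (leM : M → M → Prop) :
    Λ × M → Λ × M → Prop :=
  fun p q => leΛ p.1 q.1 ∧ leM p.2 q.2

/-- A net `F : Λ → Y^X` converges continuously to `f ∈ Y^X` if for every `x ∈ X` and every
net `s : M → X` converging to `x` in `(X, u)`, the net `(l, m) ↦ (F l) (s m)` (indexed by
`Λ × M` with the product order) converges to `f x` in `(Y, v)`. -/
def ContConv (u : CechClosure X) (v : CechClosure Y) {Λ : Type u} (leΛ : Λ → Λ → Prop)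
    (F : Λ → ContMap u v) (f : ContMap u v) : Prop :=
  ∀ (M : Type u) (leM : M → M → Prop), IsDirectedOrder leM →
    ∀ (s : M → X) (x : X), NetConv u leM s x →
      NetConv v (prodLE leΛ leM) (fun p : Λ × M => (F p.1).1 (s p.2)) (f.1 x)

/-- The upper limit of a net `A : Λ → Set X` of subsets of a closure space `(X, u)`: the set
of points `x` such that for every `l₀` and every neighbourhood `U` of `x` there is `l ≥ l₀`
with `A l ∩ U ≠ ∅`. -/
def UpperLim (u : CechClosure X) {Λ : Type*} (le : Λ → Λ → Prop) (A : Λ → Set X) : Set X :=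
  {x | ∀ (l₀ : Λ) (U : Set X), u.Nhd x U → ∃ l, le l₀ l ∧ (A l ∩ U).Nonempty}

/-- `g : M → α` is a subnet of `f : Λ → α`: there is `φ : M → Λ` with `g = f ∘ φ` such that
`φ` is residually above any given index of `Λ`. -/
def IsSubnet {α : Type*} {Λ M : Type*} (leΛ : Λ → Λ → Prop) (leM : M → M → Prop)
    (f : Λ → α) (g : M → α) : Prop :=
  ∃ φ : M → Λ, (∀ m, g m = f (φ m)) ∧ ∀ l₀, ∃ m₀, ∀ m, leM m₀ m → leΛ l₀ (φ m)

end CechClosure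
namespace CechClosure

variable {X Y : Type u}

/-- A closure space `(X, u)` is regular if for each point `x` and each set `A` with
`x ∉ u A` there exist a neighbourhood `U` of `x` and a neighbourhood `V` of `A`
(i.e. `A ⊆ int_u V`) such that `U ∩ V = ∅`. -/
def Regular (u : CechClosure X) : Prop :=
  ∀ (x : X) (A : Set X), x ∉ u.cl A →
    ∃ U V : Set X, u.Nhd x U ∧ A ⊆ u.interior V ∧ U ∩ V = ∅

/-- `𝒞` is an interior cover of `(X, u)`: the interiors of its members cover `X`. -/
def IsInteriorCover (u : CechClosure X) (𝒞 : Set (Set X)) : Prop :=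
  ∀ x : X, ∃ C ∈ 𝒞, x ∈ u.interior C

/-- The `𝒞`-topology on `Y^X`, for an interior cover `𝒞` of `X`: the topology with
subbase all sets `(u K, V) = {f | f '' u K ⊆ V}` where `int_v V ≠ ∅` and `u K ⊆ C` for
some `C ∈ 𝒞`. -/
def coverTopology (u : CechClosure X) (v : CechClosure Y) (𝒞 : Set (Set X)) :
    TopologicalSpace (ContMap u v) :=
  TopologicalSpace.generateFrom
    {S | ∃ (K : Set X) (V : Set Y), (v.interior V).Nonempty ∧ (∃ C ∈ 𝒞, u.cl K ⊆ C) ∧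
      S = {f : ContMap u v | f.1 '' u.cl K ⊆ V}}

open scoped Topology

theorem cl_mono (u : CechClosure X) {A B : Set X} (h : A ⊆ B) : u.cl A ⊆ u.cl B := by
  rw [← union_eq_self_of_subset_left h, u.cl_union]
  exact subset_union_left

theorem interior_compl (u : CechClosure X) (A : Set X) : u.interior Aᶜ = (u.cl A)ᶜ := by
  rw [interior, compl_compl]

theorem Continuous.mem_cl_of_mem_cl_preimage {u : CechClosure X} {v : CechClosure Y}
    {f : X → Y} (hf : Continuous u v f) {B : Set Y} {x : X} (hx : x ∈ u.cl (f ⁻¹' B)) :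
    f x ∈ v.cl B :=
  v.cl_mono (image_preimage_subset f B) (hf _ ⟨x, hx, rfl⟩)

theorem Continuous.nhd_preimage_of_isOpen {Z : Type u} {w : CechClosure Z}
    {t : TopologicalSpace Y} {G : Z → Y} (hG : Continuous w (ofTop t) G) {S : Set Y}
    (hS : IsOpen[t] S) {z : Z} (hz : G z ∈ S) : w.Nhd z (G ⁻¹' S) := by
  intro hzc
  have hGz : G z ∈ closure[t] (G '' (G ⁻¹' S)ᶜ) := hG _ ⟨z, hzc, rfl⟩
  have hclosed : closure[t] (G '' (G ⁻¹' S)ᶜ) ⊆ Sᶜ :=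
    closure_minimal (image_subset_iff.mpr subset_rfl) hS.isClosed_compl
  exact hclosed hGz hz

theorem Regular.exists_nhd_cl_subset {u : CechClosure X} (hreg : Regular u) {x : X}
    {C : Set X} (hC : u.Nhd x C) : ∃ K, u.Nhd x K ∧ u.cl K ⊆ C := by
  obtain ⟨U, V, hU, hCV, hUV⟩ := hreg x Cᶜ hC
  refine ⟨U, hU, fun t ht => ?_⟩
  by_contra htC
  have hUV' : U ⊆ Vᶜ := subset_compl_iff_disjoint_right.mpr (disjoint_iff_inter_eq_empty.mpr hUV)
  exact hCV htC (u.cl_mono hUV' ht)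

theorem isOpen_coverTopology {u : CechClosure X} {v : CechClosure Y} {𝒞 : Set (Set X)}
    {K : Set X} {C : Set X} (hC : C ∈ 𝒞) (hKC : u.cl K ⊆ C) {V : Set Y}
    (hV : (v.interior V).Nonempty) :
    IsOpen[coverTopology u v 𝒞] {f : ContMap u v | f.1 '' u.cl K ⊆ V} :=
  TopologicalSpace.GenerateOpen.basic _ ⟨K, V, hV, ⟨C, hC, hKC⟩, rfl⟩

/-- Let `(X, u)` be a regular closure space and `(Y, v)` arbitrary.  For every interior
cover `𝒞` of `X`, the `𝒞`-topology on `Y^X` is admissible. -/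
theorem coverTopology_admissible (u : CechClosure X) (v : CechClosure Y)
    (hreg : Regular u) (𝒞 : Set (Set X)) (hcov : IsInteriorCover u 𝒞) :
    Admissible u v (ofTop (coverTopology u v 𝒞)) := by
  intro Z w G hG A
  rintro _ ⟨⟨z, x⟩, hzx, rfl⟩
  by_contra hy
  set B : Set Y := (fun p : Z × X => (G p.1).1 p.2) '' A
  obtain ⟨C, hC, hxC⟩ := hcov x
  have hxB : u.Nhd x ((G z).1 ⁻¹' Bᶜ) := by
    rw [Nhd, preimage_compl, interior_compl]
    exact fun hx => hy ((G z).2.mem_cl_of_mem_cl_preimage hx)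
  obtain ⟨K, hK, hKC⟩ := hreg.exists_nhd_cl_subset (u.nhd_inter hxC hxB)
  have hS := isOpen_coverTopology (v := v) hC (hKC.trans inter_subset_left)
    (V := Bᶜ) ⟨_, by rwa [interior_compl]⟩
  have hzS : G z ∈ {f : ContMap u v | f.1 '' u.cl K ⊆ Bᶜ} :=
    image_subset_iff.mpr (hKC.trans inter_subset_right)
  obtain ⟨q, ⟨hqS, hqK⟩, hqA⟩ :=
    hzx _ _ (hG.nhd_preimage_of_isOpen hS hzS) hK
  exact hqS ⟨q.2, u.subset_cl _ hqK, rfl⟩ ⟨q, hqA, rfl⟩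

end CechClosure
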